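/- arXiv:2001.11952 — 2 statements merged into one kernel-verified Lean document; each statement's English description precedes it below -/
import Mathlib

section
/- Suppose F : [0,∞)² → ℝ and H : [0,∞) → ℝ are continuous with H(0) = 0, condition (A5) holds with constants K₁, K₂, K₃ and function F₂, and in addition H(u) ≤ K₅ for all u ≥ 0, where K₅ > 0 (condition (A6b)). If (u, v) is a nonnegative classical solution of the steady-state system (S) on a bounded open set Ω ⊂ ℝⁿ with zero Dirichlet boundary values, then 0 ≤ v(x) ≤ K₅ and 0 ≤ u(x) ≤ (1/K₁)·max_{0 ≤ s ≤ K₅} F₂(s) for all x ∈ Ω. -/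
open Set Filter Topology

/-! At an interior maximum of a `C²` function every second directional derivative, hence the
Laplacian, is nonpositive. As `u, v ≥ 0` vanish on `∂Ω`, both attain their maximum over `Ω` at a
point of `Ω`. At a maximum point `x₀` of `v` the second equation forces `v x₀ ≤ H (u x₀) ≤ K₅`.
At a maximum point `x₁` of `u` the first one forces `0 ≤ F (u x₁) (v x₁) ≤ -K₁ u x₁ + F₂ (v x₁)`,
and `v x₁ ∈ [0, K₅]` bounds `F₂ (v x₁)` by `F₂max`. -/

/-- The Laplacian of `f` at `x`: the trace of the second derivative. -/
noncomputable def Lap {n : ℕ} (f : EuclideanSpace ℝ (Fin n) → ℝ)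
    (x : EuclideanSpace ℝ (Fin n)) : ℝ :=
  ∑ i : Fin n, iteratedFDeriv ℝ 2 f x ![EuclideanSpace.single i (1 : ℝ), EuclideanSpace.single i 1]

theorem IsLocalMax.deriv_deriv_nonpos {g : ℝ → ℝ} {t : ℝ} (hmax : IsLocalMax g t)
    (hc : ContinuousAt g t) : deriv (deriv g) t ≤ 0 := by
  by_contra! hpos
  -- a positive second derivative would also make `t` a local minimum, so `g` is locally constant
  have hmin : IsLocalMin g t := isLocalMin_of_deriv_deriv_pos hpos hmax.deriv_eq_zero hc
  have hconst : g =ᶠ[𝓝 t] fun _ ↦ g t := by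
    filter_upwards [hmax, hmin] with s hs hs' using le_antisymm hs hs'
  have hderiv : deriv g =ᶠ[𝓝 t] fun _ ↦ 0 := by
    filter_upwards [hconst.eventuallyEq_nhds] with s hs
    rw [hs.deriv_eq, deriv_const]
  rw [hderiv.deriv_eq, deriv_const] at hpos
  exact lt_irrefl 0 hpos

section LineRestriction

variable {E : Type*} [NormedAddCommGroup E] [NormedSpace ℝ E]

theorem ContDiffAt.deriv_deriv_comp_add_smul {F : Type*} [NormedAddCommGroup F] [NormedSpace ℝ F]
    {f : E → F} {x : E} (hf : ContDiffAt ℝ 2 f x) (w : E) :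
    deriv (deriv fun t : ℝ ↦ f (x + t • w)) 0 = fderiv ℝ (fderiv ℝ f) x w w := by
  have hline : ∀ t : ℝ, HasDerivAt (fun s : ℝ ↦ x + s • w) w t := fun t ↦ by
    simpa using ((hasDerivAt_id t).smul_const w).const_add x
  have hnear : ∀ᶠ t in 𝓝 (0 : ℝ), ContDiffAt ℝ 2 f (x + t • w) := by
    have hc : ContinuousAt (fun s : ℝ ↦ x + s • w) 0 := (hline 0).continuousAt
    refine hc.eventually (p := fun y ↦ ContDiffAt ℝ 2 f y) ?_
    simpa only [zero_smul, add_zero] using hf.eventually (by simp)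
  have hfirst : deriv (fun t : ℝ ↦ f (x + t • w)) =ᶠ[𝓝 0] fun t ↦ fderiv ℝ f (x + t • w) w := by
    filter_upwards [hnear] with t ht
    exact ((ht.differentiableAt two_ne_zero).hasFDerivAt.comp_hasDerivAt t (hline t)).deriv
  have hsecond : HasFDerivAt (fderiv ℝ f) (fderiv ℝ (fderiv ℝ f) x) (x + (0 : ℝ) • w) := by
    rw [zero_smul, add_zero]
    exact ((hf.fderiv_right (m := 1) le_rfl).differentiableAt one_ne_zero).hasFDerivAt
  have hfderiv_line :
      HasDerivAt (fun t : ℝ ↦ fderiv ℝ f (x + t • w)) (fderiv ℝ (fderiv ℝ f) x w) 0 :=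
    hsecond.comp_hasDerivAt (x := (0 : ℝ)) (hline 0)
  rw [hfirst.deriv_eq, (hfderiv_line.clm_apply (hasDerivAt_const (0 : ℝ) w)).deriv]
  simp

theorem IsLocalMax.fderiv_fderiv_apply_self_nonpos {f : E → ℝ} {x : E} (hmax : IsLocalMax f x)
    (hf : ContDiffAt ℝ 2 f x) (w : E) : fderiv ℝ (fderiv ℝ f) x w w ≤ 0 := by
  set line : ℝ → E := fun t ↦ x + t • w
  have hline : ContinuousAt line 0 := by fun_prop
  have hline0 : line 0 = x := by simp [line]
  have hcont : ContinuousAt f (line 0) := hline0 ▸ hf.continuousAt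
  rw [← hf.deriv_deriv_comp_add_smul w]
  refine IsLocalMax.deriv_deriv_nonpos ?_ ?_
  · exact (hline0 ▸ hmax : IsLocalMax f (line 0)).comp_continuous hline
  · exact hcont.comp hline

end LineRestriction

open InnerProductSpace Laplacian in
theorem IsLocalMax.laplacian_nonpos {E : Type*} [NormedAddCommGroup E] [InnerProductSpace ℝ E]
    [FiniteDimensional ℝ E] {f : E → ℝ} {x : E} (hmax : IsLocalMax f x)
    (hf : ContDiffAt ℝ 2 f x) : Δ f x ≤ 0 := by
  rw [laplacian_eq_iteratedFDeriv_stdOrthonormalBasis]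
  refine Finset.sum_nonpos fun i _ ↦ ?_
  simpa [iteratedFDeriv_two_apply] using hmax.fderiv_fderiv_apply_self_nonpos hf _

open InnerProductSpace Laplacian in
theorem lap_eq_laplacian {n : ℕ} (f : EuclideanSpace ℝ (Fin n) → ℝ) : Lap f = Δ f := by
  rw [laplacian_eq_iteratedFDeriv_orthonormalBasis f (EuclideanSpace.basisFun _ ℝ)]
  ext x
  simp [Lap]

theorem lap_nonpos_of_isMaxOn {n : ℕ} {Ω : Set (EuclideanSpace ℝ (Fin n))} (hΩ : IsOpen Ω)
    {f : EuclideanSpace ℝ (Fin n) → ℝ} (hf : ContDiffOn ℝ 2 f Ω) {x : EuclideanSpace ℝ (Fin n)}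
    (hx : x ∈ Ω) (hmax : IsMaxOn f Ω x) : Lap f x ≤ 0 := by
  rw [lap_eq_laplacian]
  exact (hmax.isLocalMax (hΩ.mem_nhds hx)).laplacian_nonpos (hf.contDiffAt (hΩ.mem_nhds hx))

theorem Bornology.IsBounded.exists_isMaxOn_of_nonneg_of_frontier_eq_zero {X : Type*}
    [PseudoMetricSpace X] [ProperSpace X] {Ω : Set X} (hΩb : Bornology.IsBounded Ω)
    (hΩne : Ω.Nonempty) {f : X → ℝ}
    (hfc : ContinuousOn f (closure Ω)) (hf0 : ∀ x ∈ frontier Ω, f x = 0)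
    (hfn : ∀ x ∈ Ω, 0 ≤ f x) : ∃ x ∈ Ω, IsMaxOn f Ω x := by
  obtain ⟨x₀, hx₀, hmax⟩ := hΩb.isCompact_closure.exists_isMaxOn hΩne.closure hfc
  have hmaxΩ : IsMaxOn f Ω x₀ := hmax.on_subset subset_closure
  rw [closure_eq_self_union_frontier] at hx₀
  rcases hx₀ with hx₀ | hx₀
  · exact ⟨x₀, hx₀, hmaxΩ⟩
  · obtain ⟨x, hx⟩ := hΩne
    -- the maximum value is `f x₀ = 0`, so every point of `Ω` is also a maximum point
    exact ⟨x, hx, fun y hy ↦ (hmaxΩ hy).trans ((hf0 x₀ hx₀).trans_le (hfn x hx))⟩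

theorem stmt9_general {n : ℕ} (Ω : Set (EuclideanSpace ℝ (Fin n)))
    (hΩo : IsOpen Ω) (hΩb : Bornology.IsBounded Ω)
    (d τ : ℝ) (hd : 0 < d) (hτ : 0 < τ)
    (F : ℝ → ℝ → ℝ) (H : ℝ → ℝ)
    -- condition (A5)
    (K₁ : ℝ) (hK₁ : 0 < K₁)
    (F₂ : ℝ → ℝ)
    (hFle : ∀ u ≥ (0:ℝ), ∀ v ≥ (0:ℝ), F u v ≤ -K₁ * u + F₂ v)
    -- condition (A6b)
    (K₅ : ℝ) (hHbd : ∀ u ≥ (0:ℝ), H u ≤ K₅)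
    -- (u, v) nonnegative classical solution of (S)
    (u v : EuclideanSpace ℝ (Fin n) → ℝ)
    (huc : ContinuousOn u (closure Ω)) (hvc : ContinuousOn v (closure Ω))
    (hu2 : ContDiffOn ℝ 2 u Ω) (hv2 : ContDiffOn ℝ 2 v Ω)
    (hub : ∀ x ∈ frontier Ω, u x = 0) (hvb : ∀ x ∈ frontier Ω, v x = 0)
    (hun : ∀ x ∈ Ω, 0 ≤ u x) (hvn : ∀ x ∈ Ω, 0 ≤ v x)
    (heq1 : ∀ x ∈ Ω, d * Lap u x + F (u x) (v x) = 0)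
    (heq2 : ∀ x ∈ Ω, d * Lap v x + (1 / τ) * (H (u x) - v x) = 0)
    -- max of F₂ on [0, K₅]
    (F₂max : ℝ) (hF₂max : IsGreatest (F₂ '' Icc 0 K₅) F₂max) :
    ∀ x ∈ Ω, 0 ≤ v x ∧ v x ≤ K₅ ∧ 0 ≤ u x ∧ u x ≤ (1 / K₁) * F₂max := by
  intro x hx
  have hv_le : ∀ y ∈ Ω, v y ≤ K₅ := by
    obtain ⟨x₀, hx₀, hmax⟩ := hΩb.exists_isMaxOn_of_nonneg_of_frontier_eq_zero ⟨x, hx⟩ hvc hvb hvn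
    have hlap := lap_nonpos_of_isMaxOn hΩo hv2 hx₀ hmax
    have hvH : 0 ≤ H (u x₀) - v x₀ := by
      refine (mul_nonneg_iff_of_pos_left (one_div_pos.2 hτ)).1 ?_
      linarith [heq2 x₀ hx₀, mul_nonpos_of_nonneg_of_nonpos hd.le hlap]
    exact fun y hy ↦ (hmax hy).trans ((sub_nonneg.1 hvH).trans (hHbd _ (hun x₀ hx₀)))
  obtain ⟨x₁, hx₁, hmax⟩ := hΩb.exists_isMaxOn_of_nonneg_of_frontier_eq_zero ⟨x, hx⟩ huc hub hun
  have hlap := lap_nonpos_of_isMaxOn hΩo hu2 hx₁ hmax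
  have hF₂ : F₂ (v x₁) ≤ F₂max := hF₂max.2 ⟨v x₁, ⟨hvn x₁ hx₁, hv_le x₁ hx₁⟩, rfl⟩
  have hK₁u : K₁ * u x₁ ≤ F₂max := by
    linarith [heq1 x₁ hx₁, mul_nonpos_of_nonneg_of_nonpos hd.le hlap,
      hFle _ (hun x₁ hx₁) _ (hvn x₁ hx₁)]
  have hu_le : u x₁ ≤ (1 / K₁) * F₂max := by
    rwa [one_div_mul_eq_div, le_div_iff₀ hK₁, mul_comm]
  exact ⟨hvn x hx, hv_le x hx, hun x hx, (hmax hx).trans hu_le⟩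

/-- a priori bounds for nonnegative classical solutions of (S) under
conditions (A5) and (A6b): 0 ≤ v ≤ K₅ and 0 ≤ u ≤ (1/K₁)·max_{[0,K₅]} F₂. -/
theorem stmt9 {n : ℕ} (Ω : Set (EuclideanSpace ℝ (Fin n)))
    (hΩo : IsOpen Ω) (hΩb : Bornology.IsBounded Ω)
    (d τ : ℝ) (hd : 0 < d) (hτ : 0 < τ)
    (F : ℝ → ℝ → ℝ) (H : ℝ → ℝ)
    (hFc : ContinuousOn (Function.uncurry F) (Ici 0 ×ˢ Ici 0))
    (hHc : ContinuousOn H (Ici 0)) (hH0 : H 0 = 0)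
    -- condition (A5)
    (K₁ K₂ K₃ : ℝ) (hK₁ : 0 < K₁) (hK₂ : 0 < K₂) (hK₃ : 0 < K₃)
    (F₂ : ℝ → ℝ) (hF₂c : ContinuousOn F₂ (Ici 0))
    (hFle : ∀ u ≥ (0:ℝ), ∀ v ≥ (0:ℝ), F u v ≤ -K₁ * u + F₂ v)
    (hF₂le : ∀ v ≥ (0:ℝ), F₂ v ≤ K₂ * v)
    (hHle : ∀ u ≥ (0:ℝ), H u ≤ K₃ * u)
    -- condition (A6b)
    (K₅ : ℝ) (hK₅ : 0 < K₅) (hHbd : ∀ u ≥ (0:ℝ), H u ≤ K₅)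
    -- (u, v) nonnegative classical solution of (S)
    (u v : EuclideanSpace ℝ (Fin n) → ℝ)
    (huc : ContinuousOn u (closure Ω)) (hvc : ContinuousOn v (closure Ω))
    (hu2 : ContDiffOn ℝ 2 u Ω) (hv2 : ContDiffOn ℝ 2 v Ω)
    (hub : ∀ x ∈ frontier Ω, u x = 0) (hvb : ∀ x ∈ frontier Ω, v x = 0)
    (hun : ∀ x ∈ Ω, 0 ≤ u x) (hvn : ∀ x ∈ Ω, 0 ≤ v x)
    (heq1 : ∀ x ∈ Ω, d * Lap u x + F (u x) (v x) = 0)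
    (heq2 : ∀ x ∈ Ω, d * Lap v x + (1 / τ) * (H (u x) - v x) = 0)
    -- max of F₂ on [0, K₅]
    (F₂max : ℝ) (hF₂max : IsGreatest (F₂ '' Icc 0 K₅) F₂max) :
    ∀ x ∈ Ω, 0 ≤ v x ∧ v x ≤ K₅ ∧ 0 ≤ u x ∧ u x ≤ (1 / K₁) * F₂max :=
  stmt9_general Ω hΩo hΩb d τ hd hτ F H K₁ hK₁ F₂ hFle K₅ hHbd u v huc hvc hu2 hv2 hub hvb hun hvn
    heq1 heq2 F₂max hF₂max
end

section
/- Let χ, ϑ, ν, d, τ > 0 and let Ω ⊂ ℝⁿ be a bounded open set. If (u, v) is a nonnegative classical solution of the Nicholson steady-state system dΔu(x) − χu(x) + ϑ v(x) e^{−ν v(x)} = 0 and dΔv(x) + (1/τ)(u(x) − v(x)) = 0 for x ∈ Ω, with u = v = 0 on ∂Ω, then 0 ≤ u(x) ≤ ϑ/(νχe) and 0 ≤ v(x) ≤ ϑ/(νχe) for all x ∈ Ω, where e is Euler's number. -/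
/-!
At an interior maximum of a `C²` function every second directional derivative is nonpositive,
so the Laplacian is nonpositive there. At an interior maximum of `u` the first equation then gives
`χ u ≤ ϑ v e^{-ν v} ≤ ϑ / (ν e)`, since `t e^{-ν t}` peaks at `t = 1/ν`; at an interior maximum
of `v` the second equation gives `v ≤ u`. Maxima on the boundary are `0`, and the closure of `Ω`
is compact, so these bounds hold everywhere in `Ω`.
-/

open Set Real

open Filter Topology

/- A local maximum with positive second derivative would also be a local minimum by the
second derivative test, so `f` would be locally constant and its second derivative zero. -/
theorem IsLocalMax.deriv_deriv_nonpos_s16 {f : ℝ → ℝ} {a : ℝ} (h : IsLocalMax f a)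
    (hc : ContinuousAt f a) : deriv (deriv f) a ≤ 0 := by
  by_contra! hpos
  have hmin : IsLocalMin f a := isLocalMin_of_deriv_deriv_pos hpos h.deriv_eq_zero hc
  have hconst : f =ᶠ[𝓝 a] fun _ => f a :=
    (h.and hmin).mono fun _ hx => le_antisymm hx.1 hx.2
  have hderiv : deriv f =ᶠ[𝓝 a] fun _ => 0 :=
    hconst.eventuallyEq_nhds.mono fun _ hx => hx.deriv_eq.trans (deriv_const _ _)
  simp [hderiv.deriv_eq] at hpos

theorem IsLocalMax.fderiv_fderiv_apply_self_nonpos_s16 {E : Type*} [NormedAddCommGroup E]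
    [NormedSpace ℝ E] {f : E → ℝ} {x : E} (h : IsLocalMax f x)
    (hf : ∀ᶠ y in 𝓝 x, DifferentiableAt ℝ f y) (hf' : DifferentiableAt ℝ (fderiv ℝ f) x)
    (w : E) : fderiv ℝ (fderiv ℝ f) x w w ≤ 0 := by
  obtain ⟨L, rfl, hL⟩ : ∃ L : ℝ → E, L 0 = x ∧ ∀ t, HasDerivAt L w t :=
    ⟨fun t => x + t • w, by simp, fun t => by
      simpa using ((hasDerivAt_id t).smul_const w).const_add x⟩
  have hderiv : deriv (f ∘ L) =ᶠ[𝓝 0] fun t => fderiv ℝ f (L t) w := by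
    filter_upwards [(hL 0).continuousAt.preimage_mem_nhds hf] with t ht
    exact (ht.hasFDerivAt.comp_hasDerivAt t (hL t)).deriv
  have hderiv2 : HasDerivAt (fun t => fderiv ℝ f (L t) w) (fderiv ℝ (fderiv ℝ f) (L 0) w w) 0 :=
    (ContinuousLinearMap.apply ℝ ℝ w).hasFDerivAt.comp_hasDerivAt 0
      (hf'.hasFDerivAt.comp_hasDerivAt 0 (hL 0))
  rw [← hderiv2.deriv, ← hderiv.deriv_eq]
  exact (h.comp_continuous (hL 0).continuousAt).deriv_deriv_nonpos_s16
    (hf.self_of_nhds.continuousAt.comp (hL 0).continuousAt)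

theorem IsLocalMax.lap_nonpos {n : ℕ} {f : EuclideanSpace ℝ (Fin n) → ℝ}
    {x : EuclideanSpace ℝ (Fin n)} (h : IsLocalMax f x) (hf : ContDiffAt ℝ 2 f x) :
    Lap f x ≤ 0 := by
  refine Finset.sum_nonpos fun i _ => ?_
  rw [iteratedFDeriv_two_apply]
  refine h.fderiv_fderiv_apply_self_nonpos_s16 ?_ ?_ _
  · exact (hf.eventually (by simp)).mono fun y hy => hy.differentiableAt (by simp)
  · exact (hf.fderiv_right (m := 1) le_rfl).differentiableAt one_ne_zero

theorem mul_exp_neg_mul_le {ν : ℝ} (hν : 0 < ν) (t : ℝ) :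
    t * exp (-ν * t) ≤ 1 / (ν * exp 1) := by
  have h := mul_exp_neg_le_exp_neg_one (ν * t)
  rw [exp_neg 1, ← one_div, le_div_iff₀ (exp_pos 1)] at h
  rw [le_div_iff₀ (by positivity), neg_mul]
  linarith

theorem forall_le_of_isLocalMax_le {X : Type*} [PseudoMetricSpace X] [ProperSpace X] {Ω : Set X}
    (hΩo : IsOpen Ω) (hΩb : Bornology.IsBounded Ω) {f : X → ℝ}
    (hf : ContinuousOn f (closure Ω)) {B : ℝ} (hfront : ∀ x ∈ frontier Ω, f x ≤ B)
    (hmax : ∀ z ∈ Ω, IsLocalMax f z → f z ≤ B) : ∀ x ∈ Ω, f x ≤ B := by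
  intro x hx
  obtain ⟨z, hzΩ, hz⟩ := hΩb.isCompact_closure.exists_isMaxOn ⟨x, subset_closure hx⟩ hf
  refine (hz (subset_closure hx)).trans ?_
  by_cases hzΩ' : z ∈ Ω
  · exact hmax z hzΩ' <| mem_of_superset (hΩo.mem_nhds hzΩ') fun y hy => hz (subset_closure hy)
  · exact hfront z ⟨hzΩ, by rwa [hΩo.interior_eq]⟩

/-- a priori bounds for nonnegative classical solutions of the Nicholson
steady state system dΔu − χu + ϑv e^{−νv} = 0, dΔv + (1/τ)(u − v) = 0 with zero
Dirichlet boundary values: 0 ≤ u, v ≤ ϑ/(νχe). -/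
theorem stmt16 {n : ℕ} (Ω : Set (EuclideanSpace ℝ (Fin n)))
    (hΩo : IsOpen Ω) (hΩb : Bornology.IsBounded Ω)
    (χ ϑ ν d τ : ℝ) (hχ : 0 < χ) (hϑ : 0 < ϑ) (hν : 0 < ν) (hd : 0 < d) (hτ : 0 < τ)
    -- (u, v) nonnegative classical solution
    (u v : EuclideanSpace ℝ (Fin n) → ℝ)
    (huc : ContinuousOn u (closure Ω)) (hvc : ContinuousOn v (closure Ω))
    (hu2 : ContDiffOn ℝ 2 u Ω) (hv2 : ContDiffOn ℝ 2 v Ω)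
    (hub : ∀ x ∈ frontier Ω, u x = 0) (hvb : ∀ x ∈ frontier Ω, v x = 0)
    (hun : ∀ x ∈ Ω, 0 ≤ u x) (hvn : ∀ x ∈ Ω, 0 ≤ v x)
    (heq1 : ∀ x ∈ Ω, d * Lap u x - χ * u x + ϑ * v x * Real.exp (-ν * v x) = 0)
    (heq2 : ∀ x ∈ Ω, d * Lap v x + (1 / τ) * (u x - v x) = 0) :
    ∀ x ∈ Ω, 0 ≤ u x ∧ u x ≤ ϑ / (ν * χ * Real.exp 1) ∧
      0 ≤ v x ∧ v x ≤ ϑ / (ν * χ * Real.exp 1) := by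
  have hB : 0 ≤ ϑ / (ν * χ * exp 1) := by positivity
  have hLap {f} (hf : ContDiffOn ℝ 2 f Ω) {z} (hz : z ∈ Ω) (hmax : IsLocalMax f z) :
      d * Lap f z ≤ 0 :=
    mul_nonpos_of_nonneg_of_nonpos hd.le (hmax.lap_nonpos (hf.contDiffAt (hΩo.mem_nhds hz)))
  have hu : ∀ x ∈ Ω, u x ≤ ϑ / (ν * χ * exp 1) := by
    refine forall_le_of_isLocalMax_le hΩo hΩb huc (fun x hx => (hub x hx).trans_le hB)
      fun z hz hmax => ?_
    have hχu : χ * u z ≤ ϑ * (1 / (ν * exp 1)) := by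
      nlinarith [heq1 z hz, hLap hu2 hz hmax, mul_exp_neg_mul_le hν (v z)]
    rw [le_div_iff₀ (by positivity)]
    rw [mul_one_div, le_div_iff₀ (by positivity)] at hχu
    linarith
  have hv : ∀ x ∈ Ω, v x ≤ ϑ / (ν * χ * exp 1) := by
    refine forall_le_of_isLocalMax_le hΩo hΩb hvc (fun x hx => (hvb x hx).trans_le hB)
      fun z hz hmax => ?_
    have h : 0 ≤ 1 / τ * (u z - v z) := by linarith [heq2 z hz, hLap hv2 hz hmax]
    have hvu : v z ≤ u z := sub_nonneg.1 (nonneg_of_mul_nonneg_right h (by positivity))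
    exact hvu.trans (hu z hz)
  exact fun x hx => ⟨hun x hx, hu x hx, hvn x hx, hv x hx⟩
end
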